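/- Let X be a σ-monotonically complete Banach lattice and let (x_k, f_k) be an absolute Schauder frame for a closed subspace E ⊆ X. Then for each x ∈ E the partial sums Σ_{k=1}^n f_k(x) x_k order converge to x as n → ∞. -/

import Mathlib

open Filter Topology

/-- Order convergence (with respect to a net, encoded by a downward directed set
with infimum `0`). -/
def OConv {X : Type*} [NormedAddCommGroup X] [Lattice X] [IsOrderedAddMonoid X]
    [HasSolidNorm X] (y : ℕ → X) (x : X) : Prop :=
  ∃ D : Set X, D.Nonempty ∧ DirectedOn (· ≥ ·) D ∧ IsGLB D 0 ∧
    ∀ d ∈ D, ∃ N, ∀ n ≥ N, |y n - x| ≤ d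

/-- In a σ-monotonically complete Banach lattice, the partial sums of an
absolute Schauder frame of a closed subspace order converge. -/
theorem stmt3 {X : Type*} [NormedAddCommGroup X] [Lattice X] [IsOrderedAddMonoid X]
    [HasSolidNorm X] [NormedSpace ℝ X] [PosSMulStrictMono ℝ X] [PosSMulReflectLT ℝ X]
    [CompleteSpace X]
    -- σ-monotone completeness: increasing norm-bounded sequences of positives have suprema
    (hmc : ∀ g : ℕ → X, (∀ n, 0 ≤ g n) → Monotone g → (∃ R : ℝ, ∀ n, ‖g n‖ ≤ R) →
      ∃ s : X, IsLUB (Set.range g) s)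
    (E : Submodule ℝ X) (hE : IsClosed (E : Set X))
    (x : ℕ → X) (hx : ∀ k, x k ∈ E) (f : ℕ → ↥E →L[ℝ] ℝ)
    -- (x_k, f_k) is a Schauder frame for E
    (hframe : ∀ u : ↥E,
      Tendsto (fun n => ∑ k ∈ Finset.range n, f k u • x k) atTop (𝓝 (u : X)))
    -- the frame is absolute
    (habs : ∀ u : ↥E, ∃ R : ℝ, ∀ n, ‖∑ k ∈ Finset.range n, |f k u • x k|‖ ≤ R) :
    ∀ u : ↥E, OConv (fun n => ∑ k ∈ Finset.range n, f k u • x k) (u : X) := by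
  intro u
  set a : ℕ → X := fun k => f k u • x k with ha
  set S : ℕ → X := fun n => ∑ k ∈ Finset.range n, a k with hS
  set g : ℕ → X := fun n => ∑ k ∈ Finset.range n, |a k| with hg
  have hg0 : ∀ n, 0 ≤ g n := fun n => Finset.sum_nonneg fun k _ => abs_nonneg _
  have hgmono : Monotone g := fun n m hnm =>
    Finset.sum_le_sum_of_subset_of_nonneg (Finset.range_subset_range.2 hnm)
      (fun k _ _ => abs_nonneg _)
  obtain ⟨s, hs⟩ := hmc g hg0 hgmono (habs u)
  have hgs : ∀ n, g n ≤ s := fun n => hs.1 ⟨n, rfl⟩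
  have habs_sum : ∀ t : Finset ℕ, |∑ k ∈ t, a k| ≤ ∑ k ∈ t, |a k| := by
    intro t
    induction t using Finset.cons_induction with
    | empty => simp [abs_zero]
    | cons k t hk ih =>
      rw [Finset.sum_cons, Finset.sum_cons]
      exact (abs_add_le _ _).trans (add_le_add_right ih _)
  have hdiff : ∀ n m, n ≤ m → |S m - S n| ≤ g m - g n := by
    intro n m hnm
    have h1 : S m - S n = ∑ k ∈ Finset.Ico n m, a k :=
      (Finset.sum_Ico_eq_sub _ hnm).symm
    have h2 : g m - g n = ∑ k ∈ Finset.Ico n m, |a k| :=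
      (Finset.sum_Ico_eq_sub _ hnm).symm
    rw [h1, h2]
    exact habs_sum _
  have hkey : ∀ n, |(u : X) - S n| ≤ s - g n := by
    intro n
    have hcont : Continuous fun z : X => |z| := by
      have h : (fun z : X => |z|) = fun z : X => z⁺ + z⁻ := by
        ext z; rw [posPart_add_negPart]
      rw [h]; exact continuous_posPart.add continuous_negPart
    have htend : Tendsto (fun m => |S m - S n|) atTop (𝓝 |(u : X) - S n|) :=
      (hcont.tendsto _).comp ((hframe u).sub tendsto_const_nhds)
    refine le_of_tendsto htend (Filter.eventually_atTop.2 ⟨n, fun m hm => ?_⟩)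
    exact (hdiff n m hm).trans (sub_le_sub_right (hgs m) _)
  refine ⟨Set.range (fun n => (s - g n) + (s - g n)), ⟨_, ⟨0, rfl⟩⟩, ?_, ?_, ?_⟩
  · rintro _ ⟨n, rfl⟩ _ ⟨m, rfl⟩
    refine ⟨_, ⟨max n m, rfl⟩, ?_, ?_⟩
    · exact add_le_add (sub_le_sub_left (hgmono (le_max_left n m)) _)
        (sub_le_sub_left (hgmono (le_max_left n m)) _)
    · exact add_le_add (sub_le_sub_left (hgmono (le_max_right n m)) _)
        (sub_le_sub_left (hgmono (le_max_right n m)) _)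
  · constructor
    · rintro _ ⟨n, rfl⟩
      have h0 : (0 : X) ≤ s - g n := sub_nonneg.2 (hgs n)
      simpa using add_le_add h0 h0
    · intro b hb
      have hb' : ∀ n, (1 / 2 : ℝ) • b ≤ s - g n := by
        intro n
        have h1 : b ≤ (2 : ℝ) • (s - g n) := by
          rw [two_smul]; exact hb ⟨n, rfl⟩
        have h2 : (1 / 2 : ℝ) • b ≤ (1 / 2 : ℝ) • ((2 : ℝ) • (s - g n)) :=
          smul_le_smul_of_nonneg_left h1 (by norm_num)
        rwa [smul_smul, show (1 / 2 : ℝ) * 2 = 1 by norm_num, one_smul] at h2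
      have hub : s ≤ s - (1 / 2 : ℝ) • b := by
        refine hs.2 ?_
        rintro _ ⟨n, rfl⟩
        exact le_sub_comm.1 (hb' n)
      have hb0 : (1 / 2 : ℝ) • b ≤ 0 := (le_sub_self_iff s).1 hub
      have h3 : (2 : ℝ) • ((1 / 2 : ℝ) • b) ≤ (2 : ℝ) • (0 : X) :=
        smul_le_smul_of_nonneg_left hb0 (by norm_num)
      rwa [smul_smul, show (2 : ℝ) * (1 / 2) = 1 by norm_num, one_smul, smul_zero] at h3
  · rintro _ ⟨n, rfl⟩
    refine ⟨n, fun m hm => ?_⟩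
    have h1 : |S m - (u : X)| ≤ |S m - S n| + |S n - (u : X)| := by
      rw [← sub_add_sub_cancel (S m) (S n) (u : X)]
      exact abs_add_le _ _
    refine h1.trans (add_le_add ?_ ?_)
    · exact (hdiff n m hm).trans (sub_le_sub_right (hgs m) _)
    · rw [abs_sub_comm]; exact hkey n
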